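/- Let T be a vector tree of infinite height, r a positive integer, c : U(T) → {1,...,r} a Souslin measurable coloring, D a dense vector subset of T, U = (U_t)_{t∈⊗D} a D-subspace of U(T), n a non-negative integer, and t ∈ ⊗D(n). Then there exist a dense vector subset D' of D and a D'-subspace U' of U(T) such that: (i) D'↾(n+1) = D↾(n+1); (ii) U' ≤ U and U'↾n = U↾n; (iii) c(V) = c(V') for all V, V' ∈ [U'] with min V = min V' = t. -/

import Mathlib

set_option autoImplicit false

/-- A rooted, finitely branching, balanced tree of height `ω` with no maximal nodes,
modelled as a prefix-closed collection of finite sequences of natural numbers. -/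
structure TreeT where
  mem : List ℕ → Prop
  root : mem []
  pref : ∀ s n, mem (s ++ [n]) → mem s
  finBranch : ∀ s, mem s → {n : ℕ | mem (s ++ [n])}.Finite
  noMax : ∀ s, mem s → ∃ n, mem (s ++ [n])

variable {d : ℕ}

/-- Membership in the level product of a vector tree: all coordinates are nodes of the
respective trees and lie on a common level. -/
def InLP (V : Fin (d + 1) → TreeT) (t : Fin (d + 1) → List ℕ) : Prop :=
  (∀ i, (V i).mem (t i)) ∧ ∀ i, (t i).length = (t 0).length

/-- The level product `⊗T` of a vector tree. -/
def LP (V : Fin (d + 1) → TreeT) : Type :=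
  {t : Fin (d + 1) → List ℕ // InLP V t}

/-- The level of an element of the level product. -/
def lev {V : Fin (d + 1) → TreeT} (t : LP V) : ℕ := (t.1 0).length

/-- The coordinatewise (prefix) ordering on the level product. -/
def lpLE {V : Fin (d + 1) → TreeT} (t s : LP V) : Prop :=
  ∀ i, t.1 i <+: s.1 i

/-- The level set of a subset of the level product. -/
def levSet {V : Fin (d + 1) → TreeT} (A : Set (LP V)) : Set ℕ := lev '' A

/-- `t` is the minimum of `W` in the ordering of the level product. -/
def isMinOf {V : Fin (d + 1) → TreeT} (t : LP V) (W : Set (LP V)) : Prop :=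
  t ∈ W ∧ ∀ s ∈ W, lpLE t s

/-- A vector subset `D` of the vector tree `V`: componentwise subsets of the trees with a
common level set. -/
structure VecSub {d : ℕ} (V : Fin (d + 1) → TreeT) where
  sets : Fin (d + 1) → Set (List ℕ)
  mem : ∀ i, ∀ u ∈ sets i, (V i).mem u
  lvl : ∀ i j, {n : ℕ | ∃ u ∈ sets i, u.length = n} = {n : ℕ | ∃ u ∈ sets j, u.length = n}

variable {d : ℕ} {V : Fin (d + 1) → TreeT}

/-- The level set `L_T(D)` of a vector subset. -/
def VecSub.lvlSet (D : VecSub V) : Set ℕ := {n : ℕ | ∃ u ∈ D.sets 0, u.length = n}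

/-- The increasing enumeration `ℓ₀ < ℓ₁ < ⋯` of the level set of `D`. -/
noncomputable def VecSub.L (D : VecSub V) (k : ℕ) : ℕ := Nat.nth (· ∈ D.lvlSet) k

/-- `D` is a dense vector subset of `V`: its level set is infinite and, for every `k`,
`D` at level `ℓ_k` dominates the `k`-th level of `V` componentwise. -/
def VecSub.IsDense (D : VecSub V) : Prop :=
  D.lvlSet.Infinite ∧
  ∀ (k : ℕ) (i : Fin (d + 1)) (u : List ℕ), (V i).mem u → u.length = k →
    ∃ w ∈ D.sets i, w.length = D.L k ∧ u <+: w

/-- `D` is a `t`-dense vector subset: componentwise, `D_i ∩ suc_{T_i}(t_i)` is dense in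
the tree `suc_{T_i}(t_i)` of successors of `t_i`. -/
def VecSub.IsTDense (D : VecSub V) (t : LP V) : Prop :=
  ∀ i : Fin (d + 1),
    {n : ℕ | ∃ u ∈ D.sets i, t.1 i <+: u ∧ u.length = n}.Infinite ∧
    ∀ (k : ℕ) (u : List ℕ), (V i).mem u → t.1 i <+: u → u.length = (t.1 i).length + k →
      ∃ w ∈ D.sets i, t.1 i <+: w ∧
        w.length = Nat.nth (· ∈ {n : ℕ | ∃ u' ∈ D.sets i, t.1 i <+: u' ∧ u'.length = n}) k ∧
        u <+: w

/-- The level product `⊗D` of a vector subset, as a subset of `⊗T`. -/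
def lprod (D : VecSub V) : Set (LP V) := {t | ∀ i, t.1 i ∈ D.sets i}

/-- The restriction `D↾m` of `D` to its first `m` levels. -/
def VecSub.restr (D : VecSub V) (m : ℕ) : Fin (d + 1) → Set (List ℕ) :=
  fun i => {w ∈ D.sets i | ∃ k < m, w.length = D.L k}

/-- The part of `⊗D` lying on the first `m` levels of `D`. -/
def lprodUpto (D : VecSub V) (m : ℕ) : Set (LP V) :=
  {t ∈ lprod D | ∃ k < m, lev t = D.L k}

/-- The `n`-th level `⊗D(n)` of the level product of `D`. -/
def lprodAt (D : VecSub V) (n : ℕ) : Set (LP V) :=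
  {t ∈ lprod D | lev t = D.L n}

/-- The Souslin operation applied to a Souslin scheme indexed by finite sequences of
naturals. -/
def souslinOp {α : Type} (s : List ℕ → Set α) : Set α :=
  ⋃ σ : ℕ → ℕ, ⋂ n : ℕ, s ((List.range n).map σ)

/-- `A` is Souslin measurable with respect to the topology `τ`: it belongs to every
collection of sets that contains the open sets, is closed under complements and finite
unions (i.e. is an algebra), and is closed under the Souslin operation. -/
def SMeas {α : Type} (τ : TopologicalSpace α) (A : Set α) : Prop :=
  ∀ C : Set (Set α),
    (∀ U : Set α, τ.IsOpen U → U ∈ C) →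
    (∀ B ∈ C, Bᶜ ∈ C) →
    (∀ B B' : Set α, B ∈ C → B' ∈ C → B ∪ B' ∈ C) →
    (∀ s : List ℕ → Set α, (∀ l, s l ∈ C) → souslinOp s ∈ C) →
    A ∈ C

/-- The product topology on subsets of `⊗T` (identified with their characteristic
functions into `Prop ≅ {0,1}`), with the discrete topology on each factor. -/
def uTop {d : ℕ} (V : Fin (d + 1) → TreeT) : TopologicalSpace (Set (LP V)) :=
  @Pi.topologicalSpace (LP V) (fun _ => Prop) (fun _ => ⊥)

/-- `u` is a `D`-subspace of `U(T)`: a family `(u t)_{t ∈ ⊗D}` of pairwise disjoint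
subsets of `⊗T`, each having a minimum, with `min (u t) = t`. -/
def IsUSub {d : ℕ} {V : Fin (d + 1) → TreeT} (D : VecSub V)
    (u : LP V → Set (LP V)) : Prop :=
  (∀ t ∈ lprod D, isMinOf t (u t)) ∧
  ∀ t ∈ lprod D, ∀ t' ∈ lprod D, t ≠ t' → Disjoint (u t) (u t')

/-- The span `[U]` of a `D`-subspace: all unions of subfamilies that still have a
minimum. -/
def spanU {d : ℕ} {V : Fin (d + 1) → TreeT} (D : VecSub V)
    (u : LP V → Set (LP V)) : Set (Set (LP V)) :=
  {W | (∃ Γ ⊆ lprod D, W = ⋃ t ∈ Γ, u t) ∧ ∃ m : LP V, isMinOf m W}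

/-!
A member of the span with minimum `t` is `U_t ∪ ⋃ {U_s | z s}` for a point `z` of the Cantor cube
indexed by the proper successors `s` of `t` in `⊗D`. This coding is continuous, and the Baire
property is preserved by the Souslin operation, so every colour class pulls back to a set with the
Baire property, and one of them is non-meagre. A fusion argument then yields infinitely many levels
`S` of `D` and a point `x` such that every `z` agreeing with `x` off the levels in `S` gets that
colour. Keep the first `n + 1` levels of `D` and the levels in `S`, and merge into `U_t` the pieces
`U_s` with `s` on a discarded level and `x s = true`: the members of the new span with minimum `t`
are all coded by such `z`.
-/

open Set Topology

theorem exists_seq_of_forall_exists {α : Type*} {p : α → Prop} {r : ℕ → α → α → Prop} {a : α}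
    (ha : p a) (h : ∀ k a, p a → ∃ b, p b ∧ r k a b) :
    ∃ f : ℕ → α, f 0 = a ∧ ∀ k, p (f k) ∧ r k (f k) (f (k + 1)) := by
  choose! g hg using h
  let f : ℕ → α := fun k => Nat.rec a (fun k b => g k b) k
  have hf : ∀ k, p (f k) := fun k => by
    induction k with
    | zero => exact ha
    | succ k ih => exact (hg k _ ih).1
  exact ⟨f, rfl, fun k => ⟨hf k, (hg k _ (hf k)).2⟩⟩

theorem exists_branch {P : List ℕ → Prop} (h₀ : P []) (h : ∀ l, P l → ∃ k, P (l ++ [k])) :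
    ∃ σ : ℕ → ℕ, ∀ n, P ((List.range n).map σ) := by
  obtain ⟨f, hf₀, hf⟩ := exists_seq_of_forall_exists (r := fun _ l l' => ∃ k, l' = l ++ [k]) h₀
    fun _ l hl => let ⟨k, hk⟩ := h l hl; ⟨_, hk, k, rfl⟩
  choose σ hσ using fun k => (hf k).2
  have hfσ : ∀ n, f n = (List.range n).map σ := fun n => by
    induction n with
    | zero => simp [hf₀]
    | succ n ih => rw [hσ, ih, List.range_succ, List.map_append, List.map_singleton]
  exact ⟨σ, fun n => hfσ n ▸ (hf n).1⟩

section Baire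

variable {α : Type*} [TopologicalSpace α]

theorem BaireMeasurableSet.of_isMeagre_diff {A E : Set α} (hE : BaireMeasurableSet E)
    (hEA : IsMeagre (E \ A)) (hAE : IsMeagre (A \ E)) : BaireMeasurableSet A := by
  have hA : A = (E \ (E \ A)) ∪ (A \ E) := by
    rw [sdiff_sdiff_right_self, inter_comm, inter_union_sdiff]
  rw [hA]
  exact (hE.diff hEA.baireMeasurableSet).union hAE.baireMeasurableSet

theorem isMeagre_diff_of_residualEq {s t : Set α} (h : s =ᵇ t) : IsMeagre (s \ t) :=
  h.mem_iff.mono fun _ hx hx' => hx'.2 (hx.1 hx'.1)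

theorem exists_not_isMeagre_preimage_singleton [BaireSpace α] [Nonempty α] {β : Type*}
    [Countable β] (f : α → β) : ∃ b, ¬IsMeagre (f ⁻¹' {b}) := by
  by_contra! h
  have hcover : (⋃ b, f ⁻¹' {b}) = univ := by ext; simp
  exact not_isMeagre_of_mem_residual Filter.univ_mem (hcover ▸ isMeagre_iUnion h)

variable [SecondCountableTopology α]

theorem exists_baireMeasurableSet_hull (A : Set α) :
    ∃ E, BaireMeasurableSet E ∧ IsMeagre (A \ E) ∧
      ∀ C, BaireMeasurableSet C → IsMeagre (A \ C) → IsMeagre (E \ C) := by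
  let 𝒰 := {B ∈ TopologicalSpace.countableBasis α | IsMeagre (B ∩ A)}
  have hbasis := TopologicalSpace.isBasis_countableBasis α
  have hW : IsOpen (⋃₀ 𝒰) := isOpen_sUnion fun B hB => hbasis.isOpen hB.1
  refine ⟨(⋃₀ 𝒰)ᶜ, hW.baireMeasurableSet.compl, ?_, fun C hC hAC => ?_⟩
  · have h𝒰 : 𝒰.Countable := (TopologicalSpace.countable_countableBasis α).mono fun B hB => hB.1
    refine (isMeagre_biUnion h𝒰 fun B hB => hB.2).mono ?_
    rintro y ⟨hyA, hyW⟩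
    obtain ⟨B, hB, hyB⟩ := not_not.1 hyW
    exact mem_biUnion hB ⟨hyB, hyA⟩
  · obtain ⟨Q, hQ, hCQ⟩ := hC.compl.residualEq_isOpen
    have hQC : IsMeagre (Q \ Cᶜ) := isMeagre_diff_of_residualEq hCQ.symm
    have hQW : Q ⊆ ⋃₀ 𝒰 := fun y hy => by
      obtain ⟨B, hB, hyB, hBQ⟩ := hbasis.exists_subset_of_mem_open hy hQ
      refine ⟨B, ⟨hB, (hQC.union hAC).mono fun z hz => ?_⟩, hyB⟩
      by_cases hzC : z ∈ C
      · exact Or.inl ⟨hBQ hz.1, not_not.2 hzC⟩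
      · exact Or.inr ⟨hz.2, hzC⟩
    refine (isMeagre_diff_of_residualEq hCQ).mono ?_
    rintro y ⟨hyW, hyC⟩
    exact ⟨hyC, fun hyQ => hyW (hQW hyQ)⟩

end Baire

def souslinTail {β : Type*} (s : List ℕ → Set β) (l : List ℕ) : Set β :=
  {y | ∃ σ : ℕ → ℕ, (List.range l.length).map σ = l ∧ ∀ n, y ∈ s ((List.range n).map σ)}

theorem souslinTail_subset {β : Type*} (s : List ℕ → Set β) (l : List ℕ) :
    souslinTail s l ⊆ s l := fun _ ⟨_, hσl, hσ⟩ => hσl ▸ hσ l.length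

theorem souslinTail_nil {β : Type} (s : List ℕ → Set β) : souslinTail s [] = souslinOp s := by
  ext; simp [souslinTail, souslinOp]

theorem souslinTail_eq_iUnion {β : Type*} (s : List ℕ → Set β) (l : List ℕ) :
    souslinTail s l = ⋃ k, souslinTail s (l ++ [k]) := by
  ext y
  simp only [souslinTail, mem_iUnion, mem_ofPred_eq, List.length_append, List.length_singleton,
    List.range_succ, List.map_append, List.map_singleton]
  constructor
  · rintro ⟨σ, hσl, hσ⟩
    exact ⟨σ l.length, σ, by rw [hσl], hσ⟩
  · rintro ⟨k, σ, hσl, hσ⟩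
    exact ⟨σ, (List.append_inj' hσl rfl).1, hσ⟩

section Souslin

variable {α : Type} [TopologicalSpace α] [SecondCountableTopology α]

theorem BaireMeasurableSet.souslinOp {s : List ℕ → Set α} (hs : ∀ l, BaireMeasurableSet (s l)) :
    BaireMeasurableSet (souslinOp s) := by
  choose H hH hAH hHmin using fun l => exists_baireMeasurableSet_hull (souslinTail s l)
  set E := fun l => H l ∩ s l
  have hE : ∀ l, BaireMeasurableSet (E l) := fun l => (hH l).inter (hs l)
  have hAE : ∀ l, IsMeagre (souslinTail s l \ E l) := fun l => by
    refine (hAH l).mono ?_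
    rintro y ⟨hyA, hyE⟩
    exact ⟨hyA, fun hyH => hyE ⟨hyH, souslinTail_subset s l hyA⟩⟩
  have hM : ∀ l, IsMeagre (E l \ ⋃ k, E (l ++ [k])) := fun l => by
    have hcover : IsMeagre (souslinTail s l \ ⋃ k, E (l ++ [k])) := by
      refine (isMeagre_iUnion fun k => hAE (l ++ [k])).mono ?_
      rintro y ⟨hy, hyE⟩
      rw [souslinTail_eq_iUnion] at hy
      obtain ⟨k, hk⟩ := mem_iUnion.1 hy
      exact mem_iUnion.2 ⟨k, hk, fun h => hyE (mem_iUnion.2 ⟨k, h⟩)⟩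
    exact (hHmin l _ (.iUnion fun k => hE _) hcover).mono
      (sdiff_subset_sdiff_left inter_subset_left)
  have hbranch : E [] \ ⋃ l, (E l \ ⋃ k, E (l ++ [k])) ⊆ _root_.souslinOp s := by
    rintro y ⟨hy, hyM⟩
    simp only [mem_iUnion, mem_sdiff, not_exists, not_and, not_forall, not_not] at hyM
    obtain ⟨σ, hσ⟩ := exists_branch (P := fun l => y ∈ E l) hy hyM
    exact mem_iUnion.2 ⟨σ, mem_iInter.2 fun n => (hσ n).2⟩
  refine (hE []).of_isMeagre_diff ((isMeagre_iUnion hM).mono fun y hy => ?_) ?_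
  · by_contra h
    exact hy.2 (hbranch ⟨hy.1, h⟩)
  · simpa [souslinTail_nil] using hAE []

end Souslin

theorem preimage_souslinOp {α β : Type} (f : α → β) (s : List ℕ → Set β) :
    f ⁻¹' souslinOp s = souslinOp fun l => f ⁻¹' s l := by
  simp only [souslinOp, preimage_iUnion, preimage_iInter]

theorem SMeas.baireMeasurableSet_preimage {α β : Type} [TopologicalSpace α]
    [SecondCountableTopology α] {τ : TopologicalSpace β} {f : α → β} (hf : Continuous[_, τ] f)
    {A : Set β} (hA : SMeas τ A) : BaireMeasurableSet (f ⁻¹' A) :=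
  hA {B | BaireMeasurableSet (f ⁻¹' B)} (fun U hU => (hf.isOpen_preimage U hU).baireMeasurableSet)
    (fun _ hB => hB.compl) (fun _ _ hB hB' => hB.union hB')
    fun s hs => by
      simpa only [mem_ofPred_eq, preimage_souslinOp] using BaireMeasurableSet.souslinOp hs

/-- A finite condition on the Cantor cube `ι → Bool`; only the values of `val` on `dom` matter. -/
structure FinCond (ι : Type*) where
  dom : Finset ι
  val : ι → Bool

namespace FinCond

variable {ι : Type*}

def cyl (q : FinCond ι) : Set (ι → Bool) := {z | ∀ a ∈ q.dom, z a = q.val a}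

instance : Preorder (FinCond ι) where
  le q q' := q.dom ⊆ q'.dom ∧ ∀ a ∈ q.dom, q'.val a = q.val a
  le_refl _ := ⟨subset_rfl, fun _ _ => rfl⟩
  le_trans _ _ _ h h' := ⟨h.1.trans h'.1, fun a ha => (h'.2 a (h.1 ha)).trans (h.2 a ha)⟩

theorem cyl_anti {q q' : FinCond ι} (h : q ≤ q') : q'.cyl ⊆ q.cyl :=
  fun _ hz a ha => (hz a (h.1 ha)).trans (h.2 a ha)

theorem val_mem_cyl (q : FinCond ι) : q.val ∈ q.cyl := fun _ _ => rfl

theorem isOpen_cyl (q : FinCond ι) : IsOpen q.cyl := by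
  have : q.cyl = ⋂ a ∈ q.dom, (fun z : ι → Bool => z a) ⁻¹' {q.val a} := by
    ext; simp [cyl]
  rw [this]
  exact q.dom.finite_toSet.isOpen_biInter fun a _ =>
    (isOpen_discrete _).preimage (continuous_apply a)

theorem exists_cyl_subset {U : Set (ι → Bool)} (hU : IsOpen U) {z : ι → Bool} (hz : z ∈ U) :
    ∃ I : Finset ι, (⟨I, z⟩ : FinCond ι).cyl ⊆ U := by
  obtain ⟨I, w, hw, hIw⟩ := isOpen_pi_iff.1 hU z hz
  exact ⟨I, fun y hy => hIw fun a ha => (hy a ha).symm ▸ (hw a ha).2⟩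

theorem exists_mem_cyl_of_monotone {Q : ℕ → FinCond ι} (hQ : Monotone Q) :
    ∃ x, ∀ k, x ∈ (Q k).cyl := by
  classical
  refine ⟨fun a => if h : ∃ k, a ∈ (Q k).dom then (Q (Nat.find h)).val a else false,
    fun k a ha => ?_⟩
  have h : ∃ k, a ∈ (Q k).dom := ⟨k, ha⟩
  dsimp only
  rw [dif_pos h]
  rcases le_total (Nat.find h) k with hle | hle
  · exact ((hQ hle).2 a (Nat.find_spec h)).symm
  · exact (hQ hle).2 a ha

theorem exists_le_cyl_pattern_subset {U : Set (ι → Bool)} (hU : IsOpen U) (hd : Dense U)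
    {E : Finset ι} {q : FinCond ι} (hq : Disjoint q.dom E) (ε : E → Bool) :
    ∃ q' ≥ q, Disjoint q'.dom E ∧ ∀ z ∈ q'.cyl, (∀ a : E, z a = ε a) → z ∈ U := by
  classical
  let r : FinCond ι := ⟨q.dom ∪ E, fun a => if h : a ∈ E then ε ⟨a, h⟩ else q.val a⟩
  obtain ⟨zs, hzr, hzU⟩ := hd.inter_open_nonempty _ r.isOpen_cyl ⟨_, r.val_mem_cyl⟩
  obtain ⟨I, hI⟩ := exists_cyl_subset hU hzU
  refine ⟨⟨q.dom ∪ (I \ E), zs⟩, ⟨Finset.subset_union_left, fun a ha => ?_⟩,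
    Finset.disjoint_union_left.2 ⟨hq, Finset.sdiff_disjoint⟩, fun z hz hzε => hI fun a ha => ?_⟩
  · simpa [r, Finset.disjoint_left.1 hq ha] using hzr a (Finset.mem_union_left _ ha)
  · by_cases haE : a ∈ E
    · simpa [r, haE, hzε ⟨a, haE⟩] using (hzr a (Finset.mem_union_right _ haE)).symm
    · exact hz a (Finset.mem_union_right _ (Finset.mem_sdiff.2 ⟨ha, haE⟩))

theorem exists_le_cyl_subset {U : Set (ι → Bool)} (hU : IsOpen U) (hd : Dense U)
    {E : Finset ι} {q : FinCond ι} (hq : Disjoint q.dom E) :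
    ∃ q' ≥ q, Disjoint q'.dom E ∧ q'.cyl ⊆ U := by
  classical
  suffices ∀ P : Finset (E → Bool), ∃ q' ≥ q, Disjoint q'.dom E ∧
      ∀ ε ∈ P, ∀ z ∈ q'.cyl, (∀ a : E, z a = ε a) → z ∈ U by
    obtain ⟨q', hq', hdisj, h⟩ := this Finset.univ
    exact ⟨q', hq', hdisj, fun z hz => h (fun a => z a) (Finset.mem_univ _) z hz fun _ => rfl⟩
  intro P
  induction P using Finset.induction_on with
  | empty => exact ⟨q, le_rfl, hq, by simp⟩
  | insert ε P _ ih =>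
    obtain ⟨q₁, hq₁, hdisj₁, h₁⟩ := ih
    obtain ⟨q₂, hq₂, hdisj₂, h₂⟩ := exists_le_cyl_pattern_subset hU hd hdisj₁ ε
    refine ⟨q₂, hq₁.trans hq₂, hdisj₂, fun ε' hε' z hz => ?_⟩
    rcases Finset.mem_insert.1 hε' with rfl | hε'
    · exact h₂ z hz
    · exact h₁ ε' hε' z (cyl_anti hq₂ hz)

theorem exists_fusion_step [DecidableEq ι] {U : Set (ι → Bool)} (hU : IsOpen U) (hd : Dense U)
    {Lev : ℕ → Finset ι} (hLev : ∀ (F : Finset ι) (b : ℕ), ∃ j, b < j ∧ Disjoint (Lev j) F)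
    {E : Finset ι} {q : FinCond ι} (hq : Disjoint q.dom E) (b : ℕ) :
    ∃ j, b < j ∧ ∃ q' ≥ q, Disjoint q'.dom (E ∪ Lev j) ∧ q'.cyl ⊆ U := by
  obtain ⟨q', hq', hdisj, hcyl⟩ := exists_le_cyl_subset hU hd hq
  obtain ⟨j, hbj, hj⟩ := hLev q'.dom b
  exact ⟨j, hbj, q', hq', Finset.disjoint_union_right.2 ⟨hdisj, hj.symm⟩, hcyl⟩

theorem exists_fusion (q₀ : FinCond ι) {G : Set (ι → Bool)} (hG : G ∈ residual (ι → Bool))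
    (Lev : ℕ → Finset ι) (hLev : ∀ (F : Finset ι) (b : ℕ), ∃ j, b < j ∧ Disjoint (Lev j) F) :
    ∃ S : Set ℕ, S.Infinite ∧ ∃ x : ι → Bool,
      ∀ z, (∀ a ∉ ⋃ j ∈ S, (Lev j : Set ι), z a = x a) → z ∈ q₀.cyl ∩ G := by
  classical
  obtain ⟨T, hTG, hTδ, hTd⟩ := mem_residual.1 hG
  obtain ⟨U, hUo, rfl⟩ := hTδ.eq_iInter_nat
  have hUd : ∀ k, Dense (U k) := fun k => hTd.mono (iInter_subset _ k)
  -- states `(b, E, q)`: the last level chosen, the union of the levels chosen so far, and a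
  -- condition leaving them free
  obtain ⟨f, hf₀, hf⟩ := exists_seq_of_forall_exists (a := (0, ∅, q₀))
    (p := fun s : ℕ × Finset ι × FinCond ι => Disjoint s.2.2.dom s.2.1)
    (r := fun k s s' => s.1 < s'.1 ∧ s.2.2 ≤ s'.2.2 ∧ s'.2.1 = s.2.1 ∪ Lev s'.1 ∧ s'.2.2.cyl ⊆ U k)
    (Finset.disjoint_empty_right _) fun k s hs => by
      obtain ⟨j, hbj, q', hq', hdisj, hcyl⟩ := exists_fusion_step (hUo k) (hUd k) hLev hs s.1
      exact ⟨(j, s.2.1 ∪ Lev j, q'), hdisj, hbj, hq', rfl, hcyl⟩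
  have hQ : Monotone fun k => (f k).2.2 := monotone_nat_of_le_succ fun k => (hf k).2.2.1
  have hE : Monotone fun k => (f k).2.1 :=
    monotone_nat_of_le_succ fun k => (hf k).2.2.2.1 ▸ Finset.subset_union_left
  have hLevE : ∀ m, Lev (f (m + 1)).1 ⊆ (f (m + 1)).2.1 :=
    fun m => (hf m).2.2.2.1 ▸ Finset.subset_union_right
  have hfree : ∀ k m, Disjoint (f k).2.2.dom (Lev (f (m + 1)).1) := fun k m =>
    (hf (max k (m + 1))).1.mono (hQ (le_max_left _ _)).1 ((hLevE m).trans (hE (le_max_right _ _)))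
  obtain ⟨x, hx⟩ := exists_mem_cyl_of_monotone hQ
  refine ⟨range fun m => (f (m + 1)).1,
    infinite_range_of_injective (strictMono_nat_of_lt_succ fun m => (hf (m + 1)).2.1).injective,
    x, fun z hz => ?_⟩
  have hzQ : ∀ k, z ∈ (f k).2.2.cyl := fun k a ha =>
    (hz a (by simpa using fun m => Finset.disjoint_left.1 (hfree k m) ha)).trans (hx k a ha)
  exact ⟨by simpa [hf₀] using hzQ 0, hTG (mem_iInter.2 fun k => (hf k).2.2.2.2 (hzQ (k + 1)))⟩

end FinCond

theorem BaireMeasurableSet.exists_fusion {ι : Type*} {A : Set (ι → Bool)}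
    (hA : BaireMeasurableSet A) (hA' : ¬IsMeagre A) {Lev : ℕ → Finset ι}
    (hLev : ∀ (F : Finset ι) (b : ℕ), ∃ j, b < j ∧ Disjoint (Lev j) F) :
    ∃ S : Set ℕ, S.Infinite ∧ ∃ x : ι → Bool,
      ∀ z, (∀ a ∉ ⋃ j ∈ S, (Lev j : Set ι), z a = x a) → z ∈ A := by
  obtain ⟨O, hO, hAO⟩ := hA.residualEq_isOpen
  obtain ⟨z₀, hz₀⟩ : O.Nonempty := nonempty_iff_ne_empty.2 fun h =>
    hA' (by simpa [h] using isMeagre_diff_of_residualEq hAO)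
  obtain ⟨I, hI⟩ := FinCond.exists_cyl_subset hO hz₀
  obtain ⟨S, hS, x, hx⟩ := FinCond.exists_fusion ⟨I, z₀⟩ (hAO.mem_iff.mono fun _ h => h.2) Lev hLev
  exact ⟨S, hS, x, fun z hz => (hx z hz).2 (hI (hx z hz).1)⟩

theorem TreeT.finite_level (T : TreeT) (m : ℕ) : {u | T.mem u ∧ u.length = m}.Finite := by
  induction m with
  | zero => exact (finite_singleton []).subset fun u hu => List.length_eq_zero_iff.1 hu.2
  | succ m ih =>
    refine (ih.biUnion fun s hs => (T.finBranch s hs.1).image fun k => s ++ [k]).subset ?_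
    rintro u ⟨hu, hlen⟩
    obtain rfl | ⟨s, k, rfl⟩ := u.eq_nil_or_concat'
    · simp at hlen
    · exact mem_biUnion ⟨T.pref s k hu, by simpa using hlen⟩ ⟨k, hu, rfl⟩

theorem TreeT.exists_extension (T : TreeT) {u : List ℕ} (hu : T.mem u) {m : ℕ}
    (hm : u.length ≤ m) : ∃ w, T.mem w ∧ w.length = m ∧ u <+: w := by
  induction m, hm using Nat.le_induction with
  | base => exact ⟨u, hu, rfl, List.prefix_refl u⟩
  | succ m _ ih =>
    obtain ⟨w, hw, hwlen, huw⟩ := ih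
    obtain ⟨k, hk⟩ := T.noMax w hw
    exact ⟨w ++ [k], hk, by simp [hwlen], huw.trans (List.prefix_append w [k])⟩

instance : Countable (LP V) := by
  unfold LP
  infer_instance

theorem lev_coord (s : LP V) (i : Fin (d + 1)) : (s.1 i).length = lev s := s.2.2 i

theorem finite_setOf_lev_eq (m : ℕ) : {s : LP V | lev s = m}.Finite := by
  refine Finite.of_finite_image ?_ Subtype.val_injective.injOn
  refine (Finite.pi fun i => (V i).finite_level m).subset ?_
  rintro _ ⟨s, hs, rfl⟩ i -
  exact ⟨s.2.1 i, (lev_coord s i).trans hs⟩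

theorem lpLE_trans {s s' s'' : LP V} (h : lpLE s s') (h' : lpLE s' s'') : lpLE s s'' :=
  fun i => (h i).trans (h' i)

theorem eq_of_lpLE_of_lev_le {s s' : LP V} (h : lpLE s s') (h' : lev s' ≤ lev s) : s = s' :=
  Subtype.ext <| funext fun i => (h i).eq_of_length_le (by rwa [lev_coord, lev_coord])

theorem lpLE_antisymm {s s' : LP V} (h : lpLE s s') (h' : lpLE s' s) : s = s' :=
  eq_of_lpLE_of_lev_le h (h' 0).length_le

theorem lev_lt_of_lpLE_of_ne {s s' : LP V} (h : lpLE s s') (hne : s ≠ s') : lev s < lev s' :=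
  lt_of_le_of_ne (h 0).length_le fun heq => hne (eq_of_lpLE_of_lev_le h heq.ge)

namespace VecSub

def onLevels (D : VecSub V) (K : Set ℕ) : VecSub V where
  sets i := {w ∈ D.sets i | w.length ∈ K}
  mem i w hw := D.mem i w hw.1
  lvl i j := by
    have key : ∀ i, {m | ∃ w ∈ {w ∈ D.sets i | w.length ∈ K}, w.length = m} =
        {m | ∃ w ∈ D.sets i, w.length = m} ∩ K := fun i => by
      ext m
      exact ⟨fun ⟨w, ⟨hw, hK⟩, hm⟩ => ⟨⟨w, hw, hm⟩, hm ▸ hK⟩,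
        fun ⟨⟨w, hw, hm⟩, hK⟩ => ⟨w, ⟨hw, hm ▸ hK⟩, hm⟩⟩
    rw [key, key, D.lvl i j]

variable {D : VecSub V}

theorem lvlSet_onLevels {K : Set ℕ} (hK : K ⊆ D.lvlSet) : (D.onLevels K).lvlSet = K :=
  Subset.antisymm (fun _ ⟨_, hw, hm⟩ => hm ▸ hw.2) fun _ hm =>
    let ⟨w, hw, hwm⟩ := hK hm
    ⟨w, ⟨hw, hwm ▸ hm⟩, hwm⟩

theorem mem_lprod_onLevels {K : Set ℕ} {s : LP V} :
    s ∈ lprod (D.onLevels K) ↔ s ∈ lprod D ∧ lev s ∈ K :=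
  ⟨fun h => ⟨fun i => (h i).1, (h 0).2⟩, fun ⟨h, hK⟩ i => ⟨h i, (lev_coord s i).symm ▸ hK⟩⟩

theorem lprod_onLevels_subset (K : Set ℕ) : lprod (D.onLevels K) ⊆ lprod D :=
  fun _ hs => (mem_lprod_onLevels.1 hs).1

theorem strictMono_L (hD : D.lvlSet.Infinite) : StrictMono D.L := Nat.nth_strictMono hD

theorem L_onLevels_image (hD : D.lvlSet.Infinite) {J : Set ℕ} (hJ : J.Infinite) (k : ℕ) :
    (D.onLevels (D.L '' J)).L k = D.L (Nat.nth (· ∈ J) k) := by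
  have hK : D.L '' J ⊆ D.lvlSet := image_subset_iff.2 fun k _ => Nat.nth_mem_of_infinite hD k
  have hinj := (strictMono_L hD).injective
  show Nat.nth (· ∈ (D.onLevels (D.L '' J)).lvlSet) k = _
  rw [lvlSet_onLevels hK, ← Nat.nth_comp_of_strictMono (strictMono_L hD)
    (fun m hm => image_subset_range _ _ hm) fun hfin => absurd hfin (hJ.image hinj.injOn)]
  simp_rw [hinj.mem_set_image]

theorem IsDense.onLevels (hD : D.IsDense) {J : Set ℕ} (hJ : J.Infinite) :
    (D.onLevels (D.L '' J)).IsDense := by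
  have hK : D.L '' J ⊆ D.lvlSet := image_subset_iff.2 fun k _ => Nat.nth_mem_of_infinite hD.1 k
  refine ⟨by rw [lvlSet_onLevels hK]; exact hJ.image (strictMono_L hD.1).injective.injOn,
    fun k i u hu hlen => ?_⟩
  have hk : u.length ≤ Nat.nth (· ∈ J) k := hlen ▸ Nat.le_nth fun hfin => absurd hfin hJ
  obtain ⟨u', hu', hlen', huu'⟩ := (V i).exists_extension hu hk
  obtain ⟨w, hw, hwlen, hu'w⟩ := hD.2 _ i u' hu' hlen'
  exact ⟨w, ⟨hw, hwlen ▸ mem_image_of_mem _ (Nat.nth_mem_of_infinite hJ k)⟩,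
    by rw [hwlen, L_onLevels_image hD.1 hJ], huu'.trans hu'w⟩

theorem restr_onLevels (hD : D.lvlSet.Infinite) {J : Set ℕ} (hJ : J.Infinite) {n : ℕ}
    (hn : Iic n ⊆ J) (i : Fin (d + 1)) :
    (D.onLevels (D.L '' J)).restr (n + 1) i = D.restr (n + 1) i := by
  have hL : ∀ k < n + 1, (D.onLevels (D.L '' J)).L k = D.L k := fun k hk => by
    rw [L_onLevels_image hD hJ, Nat.nth_of_forall fun m hm => hn (by simp only [mem_Iic]; omega)]
  ext w
  constructor
  · rintro ⟨⟨hw, -⟩, k, hk, hlen⟩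
    exact ⟨hw, k, hk, hlen.trans (hL k hk)⟩
  · rintro ⟨hw, k, hk, hlen⟩
    exact ⟨⟨hw, hlen ▸ mem_image_of_mem _ (hn (Nat.lt_succ_iff.1 hk))⟩, k, hk,
      hlen.trans (hL k hk).symm⟩

end VecSub

open VecSub

theorem ne_of_mem_lprodUpto {D : VecSub V} (hD : D.lvlSet.Infinite) {n : ℕ} {s t : LP V}
    (hs : s ∈ lprodUpto D n) (ht : t ∈ lprodAt D n) : s ≠ t := by
  rintro rfl
  obtain ⟨-, k, hk, hlev⟩ := hs
  exact hk.ne ((strictMono_L hD).injective (hlev.symm.trans ht.2))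

def Cone (D : VecSub V) (t : LP V) : Type := {s : LP V // s ∈ lprod D ∧ lpLE t s ∧ s ≠ t}

instance (D : VecSub V) (t : LP V) : Countable (Cone D t) := by
  unfold Cone
  infer_instance

section Cone

variable {D : VecSub V} {t : LP V} {u : LP V → Set (LP V)}

noncomputable def coneLevel (D : VecSub V) (t : LP V) (j : ℕ) : Finset (Cone D t) :=
  ((finite_setOf_lev_eq (D.L j)).preimage Subtype.val_injective.injOn).toFinset

theorem mem_coneLevel {a : Cone D t} {j : ℕ} : a ∈ coneLevel D t j ↔ lev a.1 = D.L j :=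
  Finite.mem_toFinset _

theorem exists_disjoint_coneLevel (hD : D.lvlSet.Infinite) (F : Finset (Cone D t)) (b : ℕ) :
    ∃ j, b < j ∧ Disjoint (coneLevel D t j) F := by
  set m := F.sup fun a => lev a.1
  refine ⟨max b m + 1, by omega, Finset.disjoint_left.2 fun a ha haF => ?_⟩
  have h₁ : lev a.1 = D.L (max b m + 1) := mem_coneLevel.1 ha
  have h₂ : lev a.1 ≤ m := Finset.le_sup (f := fun a => lev a.1) haF
  have h₃ : max b m + 1 ≤ D.L (max b m + 1) := (strictMono_L hD).le_apply
  omega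

theorem mem_coneLevel_of_mem_lprod_onLevels (hD : D.lvlSet.Infinite) {n : ℕ}
    (ht : t ∈ lprodAt D n) {S : Set ℕ} {a : Cone D t}
    (ha : a.1 ∈ lprod (D.onLevels (D.L '' (Iic n ∪ S)))) :
    a ∈ ⋃ j ∈ S, (coneLevel D t j : Set (Cone D t)) := by
  obtain ⟨-, j, hj, hlev⟩ := mem_lprod_onLevels.1 ha
  have hlt : D.L n < D.L j := ht.2 ▸ hlev ▸ lev_lt_of_lpLE_of_ne a.2.2.1 a.2.2.2.symm
  have hjS : j ∈ S := hj.resolve_left fun hjn => hlt.not_ge ((strictMono_L hD).monotone hjn)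
  exact mem_biUnion hjS (mem_coneLevel.2 hlev.symm)

variable (D t u) in
def coneUnion (z : Cone D t → Bool) : Set (LP V) :=
  u t ∪ ⋃ (a : Cone D t) (_ : z a = true), u a.1

/-- Each point of `⊗T` lies in at most one piece `u a`, so membership in `coneUnion D t u z`
depends on at most one coordinate of `z`. -/
theorem continuous_coneUnion (hu : IsUSub D u) : Continuous[_, uTop V] (coneUnion D t u) := by
  let _ : TopologicalSpace Prop := ⊥
  have : DiscreteTopology Prop := ⟨rfl⟩
  unfold uTop
  refine continuous_pi fun y => ?_
  show Continuous fun z => y ∈ coneUnion D t u z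
  by_cases hyt : y ∈ u t
  · simp only [coneUnion, mem_union, hyt, true_or]
    exact continuous_const
  by_cases hy : ∃ a : Cone D t, y ∈ u a.1
  · obtain ⟨a, ha⟩ := hy
    have hfun : (fun z => y ∈ coneUnion D t u z) = fun z => z a = true := by
      ext z
      simp only [coneUnion, mem_union, hyt, false_or, mem_iUnion, exists_prop]
      refine ⟨fun ⟨a', hza', hya'⟩ => ?_, fun hza => ⟨a, hza, ha⟩⟩
      by_contra hne
      have hne' : a'.1 ≠ a.1 := fun h => hne (Subtype.ext h ▸ hza')
      exact disjoint_left.1 (hu.2 _ a'.2.1 _ a.2.1 hne') hya' ha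
    rw [hfun]
    exact (continuous_of_discreteTopology (f := fun b : Bool => b = true)).comp (continuous_apply a)
  · simp only [not_exists] at hy
    simp only [coneUnion, mem_union, hyt, false_or, mem_iUnion, exists_prop, hy, and_false,
      exists_false]
    exact continuous_const

theorem biUnion_eq_coneUnion {Γ : Set (LP V)} (hΓ : Γ ⊆ lprod D) (ht : t ∈ Γ)
    (hle : ∀ s ∈ Γ, lpLE t s) {z : Cone D t → Bool} (hz : ∀ a, z a = true ↔ a.1 ∈ Γ) :
    ⋃ s ∈ Γ, u s = coneUnion D t u z := by
  ext y
  simp only [coneUnion, mem_iUnion, mem_union, exists_prop, hz]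
  constructor
  · rintro ⟨s, hs, hy⟩
    by_cases hst : s = t
    · exact Or.inl (hst ▸ hy)
    · exact Or.inr ⟨⟨s, hΓ hs, hle s hs, hst⟩, hs, hy⟩
  · rintro (hy | ⟨a, ha, hy⟩)
    · exact ⟨t, ht, hy⟩
    · exact ⟨a.1, ha, hy⟩

end Cone

theorem IsUSub.mem_and_le_of_isMinOf {D : VecSub V} {u : LP V → Set (LP V)} (hu : IsUSub D u)
    {Γ : Set (LP V)} (hΓ : Γ ⊆ lprod D) {t : LP V} (h : isMinOf t (⋃ s ∈ Γ, u s)) :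
    t ∈ Γ ∧ ∀ s ∈ Γ, lpLE t s := by
  have hle : ∀ s ∈ Γ, lpLE t s := fun s hs => h.2 s (mem_biUnion hs (hu.1 s (hΓ hs)).1)
  obtain ⟨s, hs, hts⟩ := mem_iUnion₂.1 h.1
  obtain rfl : s = t := lpLE_antisymm ((hu.1 s (hΓ hs)).2 t hts) (hle s hs)
  exact ⟨hs, hle⟩

section Absorb

variable {u : LP V → Set (LP V)} {t : LP V} {P : Set (LP V)}

open Classical in
noncomputable def absorb (u : LP V → Set (LP V)) (t : LP V) (P : Set (LP V)) :
    LP V → Set (LP V) :=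
  Function.update u t (u t ∪ ⋃ p ∈ P, u p)

theorem absorb_self : absorb u t P t = u t ∪ ⋃ p ∈ P, u p := by
  simp [absorb]

theorem absorb_of_ne {s : LP V} (h : s ≠ t) : absorb u t P s = u s := by
  simp [absorb, h]

theorem biUnion_absorb_of_mem {Γ : Set (LP V)} (ht : t ∈ Γ) :
    ⋃ s ∈ Γ, absorb u t P s = ⋃ s ∈ Γ ∪ P, u s := by
  ext y
  simp only [mem_iUnion, mem_union, exists_prop]
  constructor
  · rintro ⟨s, hs, hy⟩
    by_cases hst : s = t
    · subst hst
      rw [absorb_self, mem_union, mem_iUnion₂] at hy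
      rcases hy with hy | ⟨p, hp, hy⟩
      · exact ⟨s, Or.inl hs, hy⟩
      · exact ⟨p, Or.inr hp, hy⟩
    · rw [absorb_of_ne hst] at hy
      exact ⟨s, Or.inl hs, hy⟩
  · rintro ⟨s, hs | hs, hy⟩
    · by_cases hst : s = t
      · exact ⟨t, ht, absorb_self (P := P) ▸ Or.inl (hst ▸ hy)⟩
      · exact ⟨s, hs, by rwa [absorb_of_ne hst]⟩
    · exact ⟨t, ht, absorb_self (P := P) ▸ Or.inr (mem_biUnion hs hy)⟩

theorem biUnion_absorb_of_notMem {Γ : Set (LP V)} (ht : t ∉ Γ) :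
    ⋃ s ∈ Γ, absorb u t P s = ⋃ s ∈ Γ, u s :=
  iUnion₂_congr fun _ hs => absorb_of_ne (ne_of_mem_of_not_mem hs ht)

variable {D D' : VecSub V}

theorem spanU_absorb_subset (hD' : lprod D' ⊆ lprod D) (hP : P ⊆ lprod D) :
    spanU D' (absorb u t P) ⊆ spanU D u := by
  rintro _ ⟨⟨Γ, hΓ, rfl⟩, hmin⟩
  refine ⟨?_, hmin⟩
  by_cases ht : t ∈ Γ
  · exact ⟨Γ ∪ P, union_subset (hΓ.trans hD') hP, biUnion_absorb_of_mem ht⟩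
  · exact ⟨Γ, hΓ.trans hD', biUnion_absorb_of_notMem ht⟩

theorem IsUSub.absorb (hu : IsUSub D u) (hD' : lprod D' ⊆ lprod D) (ht : t ∈ lprod D')
    (hP : P ⊆ lprod D) (hPD' : Disjoint P (lprod D')) (hPt : ∀ p ∈ P, lpLE t p) :
    IsUSub D' (absorb u t P) := by
  have hmin : isMinOf t (u t ∪ ⋃ p ∈ P, u p) := by
    refine ⟨Or.inl (hu.1 t (hD' ht)).1, fun y hy => ?_⟩
    rcases hy with hy | hy
    · exact (hu.1 t (hD' ht)).2 y hy
    · obtain ⟨p, hp, hy⟩ := mem_iUnion₂.1 hy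
      exact lpLE_trans (hPt p hp) ((hu.1 p (hP hp)).2 y hy)
  have hdisj : ∀ s ∈ lprod D', s ≠ t → Disjoint (u t ∪ ⋃ p ∈ P, u p) (u s) := fun s hs hst =>
    Disjoint.union_left (hu.2 t (hD' ht) s (hD' hs) (Ne.symm hst)) <|
      disjoint_iUnion₂_left.2 fun p hp =>
        hu.2 p (hP hp) s (hD' hs) fun hps => disjoint_left.1 hPD' hp (hps ▸ hs)
  refine ⟨fun s hs => ?_, fun s hs s' hs' hne => ?_⟩
  · rcases eq_or_ne s t with rfl | hst
    · rw [absorb_self]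
      exact hmin
    · rw [absorb_of_ne hst]
      exact hu.1 s (hD' hs)
  · rcases eq_or_ne s t with rfl | hst
    · rw [absorb_self, absorb_of_ne hne.symm]
      exact hdisj s' hs' hne.symm
    rcases eq_or_ne s' t with rfl | hs't
    · rw [absorb_self, absorb_of_ne hst]
      exact (hdisj s hs hst).symm
    rw [absorb_of_ne hst, absorb_of_ne hs't]
    exact hu.2 s (hD' hs) s' (hD' hs') hne

end Absorb

section AbsorbedPieces

variable {D D' : VecSub V} {t : LP V} {F : Set (Cone D t)} {x : Cone D t → Bool}

variable (F x) in
def absorbedPieces : Set (LP V) := Subtype.val '' {a : Cone D t | a ∉ F ∧ x a = true}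

theorem absorbedPieces_subset_lprod : absorbedPieces F x ⊆ lprod D :=
  image_subset_iff.2 fun a _ => a.2.1

theorem lpLE_of_mem_absorbedPieces : ∀ p ∈ absorbedPieces F x, lpLE t p := by
  rintro _ ⟨a, -, rfl⟩
  exact a.2.2.1

theorem disjoint_absorbedPieces (hF : ∀ a : Cone D t, a.1 ∈ lprod D' → a ∈ F) :
    Disjoint (absorbedPieces F x) (lprod D') := by
  rintro _ hP hD' _ hp
  obtain ⟨a, ha, rfl⟩ := hP hp
  exact ha.1 (hF a (hD' hp))

theorem exists_eq_coneUnion_of_isMinOf {u : LP V → Set (LP V)} (hu : IsUSub D u)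
    (hD' : lprod D' ⊆ lprod D) (ht : t ∈ lprod D') (hF : ∀ a : Cone D t, a.1 ∈ lprod D' → a ∈ F)
    {W : Set (LP V)} (hW : W ∈ spanU D' (absorb u t (absorbedPieces F x))) (hmin : isMinOf t W) :
    ∃ z, (∀ a ∉ F, z a = x a) ∧ W = coneUnion D t u z := by
  classical
  obtain ⟨⟨Γ, hΓ, rfl⟩, -⟩ := hW
  obtain ⟨htΓ, hΓt⟩ := (hu.absorb hD' ht absorbedPieces_subset_lprod (disjoint_absorbedPieces hF)
    lpLE_of_mem_absorbedPieces).mem_and_le_of_isMinOf hΓ hmin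
  refine ⟨fun a => decide (a.1 ∈ Γ ∪ absorbedPieces F x), fun a ha => ?_, ?_⟩
  · have haΓ : a.1 ∉ Γ := fun h => ha (hF a (hΓ h))
    have hxa : a.1 ∈ Γ ∪ absorbedPieces F x ↔ x a = true :=
      (or_iff_right haΓ).trans (Subtype.val_injective.mem_set_image.trans (and_iff_right ha))
    exact Bool.eq_iff_iff.2 (decide_eq_true_iff.trans hxa)
  · rw [biUnion_absorb_of_mem htΓ]
    exact biUnion_eq_coneUnion (union_subset (hΓ.trans hD') absorbedPieces_subset_lprod)
      (Or.inl htΓ) (fun s hs => hs.elim (hΓt s) (lpLE_of_mem_absorbedPieces s))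
      fun a => decide_eq_true_iff

end AbsorbedPieces

theorem stmt15_general {d : ℕ} (V : Fin (d + 1) → TreeT)
    (r : ℕ) (c : Set (LP V) → Fin r)
    (hc : ∀ γ : Fin r, SMeas (uTop V) {W | c W = γ})
    (D : VecSub V) (hD : D.IsDense)
    (u : LP V → Set (LP V)) (hu : IsUSub D u)
    (n : ℕ) (t : LP V) (ht : t ∈ lprodAt D n) :
    ∃ (D' : VecSub V) (u' : LP V → Set (LP V)),
      (∀ i, D'.sets i ⊆ D.sets i) ∧ D'.IsDense ∧ IsUSub D' u' ∧
      (∀ i, D'.restr (n + 1) i = D.restr (n + 1) i) ∧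
      spanU D' u' ⊆ spanU D u ∧
      (∀ s ∈ lprodUpto D n, u' s = u s) ∧
      ∀ W ∈ spanU D' u', ∀ W' ∈ spanU D' u',
        isMinOf t W → isMinOf t W' → c W = c W' := by
  obtain ⟨γ, hγ⟩ := exists_not_isMeagre_preimage_singleton (c ∘ coneUnion D t u)
  obtain ⟨S, hS, x, hx⟩ := ((hc γ).baireMeasurableSet_preimage
    (continuous_coneUnion hu)).exists_fusion hγ (exists_disjoint_coneLevel hD.1)
  set F := ⋃ j ∈ S, (coneLevel D t j : Set (Cone D t))
  set D' := D.onLevels (D.L '' (Iic n ∪ S))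
  have hJ : (Iic n ∪ S).Infinite := hS.mono subset_union_right
  have hD'D : lprod D' ⊆ lprod D := lprod_onLevels_subset _
  have htD' : t ∈ lprod D' := mem_lprod_onLevels.2 ⟨ht.1, n, Or.inl (mem_Iic.2 le_rfl), ht.2.symm⟩
  have hF : ∀ a : Cone D t, a.1 ∈ lprod D' → a ∈ F :=
    fun a ha => mem_coneLevel_of_mem_lprod_onLevels hD.1 ht ha
  have hcolor : ∀ W ∈ spanU D' (absorb u t (absorbedPieces F x)), isMinOf t W → c W = γ :=
    fun W hW hmin => by
      obtain ⟨z, hzx, rfl⟩ := exists_eq_coneUnion_of_isMinOf hu hD'D htD' hF hW hmin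
      exact hx z hzx
  exact ⟨D', absorb u t (absorbedPieces F x), fun i => sep_subset _ _, hD.onLevels hJ,
    hu.absorb hD'D htD' absorbedPieces_subset_lprod (disjoint_absorbedPieces hF)
      lpLE_of_mem_absorbedPieces,
    restr_onLevels hD.1 hJ subset_union_left, spanU_absorb_subset hD'D absorbedPieces_subset_lprod,
    fun s hs => absorb_of_ne (ne_of_mem_lprodUpto hD.1 hs ht),
    fun W hW W' hW' hmin hmin' => (hcolor W hW hmin).trans (hcolor W' hW' hmin').symm⟩

/-- **Canonicalizing the color at one minimum.** Given a Souslin measurable coloring `c`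
of `U(T)`, a dense vector subset `D` of `T`, a `D`-subspace `U = (u t)`, a level `n`, and
`t ∈ ⊗D(n)`, there are a dense vector subset `D'` of `D` and a `D'`-subspace `U' = (u' t)`
such that (i) `D'↾(n+1) = D↾(n+1)`, (ii) `U' ≤ U` and `U'↾n = U↾n`, and (iii) any two
members of the span of `U'` with minimum `t` receive the same color. -/
theorem stmt15 {d : ℕ} (V : Fin (d + 1) → TreeT)
    (r : ℕ) (hr : 0 < r) (c : Set (LP V) → Fin r)
    (hc : ∀ γ : Fin r, SMeas (uTop V) {W | c W = γ})
    (D : VecSub V) (hD : D.IsDense)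
    (u : LP V → Set (LP V)) (hu : IsUSub D u)
    (n : ℕ) (t : LP V) (ht : t ∈ lprodAt D n) :
    ∃ (D' : VecSub V) (u' : LP V → Set (LP V)),
      (∀ i, D'.sets i ⊆ D.sets i) ∧ D'.IsDense ∧ IsUSub D' u' ∧
      (∀ i, D'.restr (n + 1) i = D.restr (n + 1) i) ∧
      spanU D' u' ⊆ spanU D u ∧
      (∀ s ∈ lprodUpto D n, u' s = u s) ∧
      ∀ W ∈ spanU D' u', ∀ W' ∈ spanU D' u',
        isMinOf t W → isMinOf t W' → c W = c W' :=
  stmt15_general V r c hc D hD u hu n t ht
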